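/- arXiv:1709.01972 — 4 statements merged into one kernel-verified Lean document; each statement's English description precedes it below -/
import Mathlib

section
/- Let M be a compact topological manifold of dimension n that is a C^r manifold (i.e., a smooth manifold with C^r structure) for some r with 2 ≤ r ≤ ∞, without boundary. Then there exists a C^r embedding of M into ℝ^{2n+1}; that is, there exists a map f : M → ℝ^{2n+1} that is C^r, is a topological embedding (a homeomorphism onto its image), and is an immersion (its differential at every point is injective). -/
/-!
Mathlib's weak Whitney theorem embeds `M` into some `ℝ^N`. While `N > 2n + 1` we project along a
direction `v` that is neither a secant direction `c • (g x - g y)` nor a tangent vector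
`dg_x(u)`: these are the ranges of `C¹` maps out of `M × M × ℝ` and `TM`, of dimensions `2n + 1`
and `2n`, so their Hausdorff dimension is too small to fill `ℝ^N`. Projecting along such a `v`
keeps the map injective and immersive. On a compact manifold an injective immersion is an
embedding.
-/

open scoped Manifold ContDiff
open Set Function Module

section LinearAlgebra

variable {K V W : Type*} [Field K] [AddCommGroup V] [Module K V] [AddCommGroup W] [Module K W]

theorem exists_linearMap_ker_eq_span_singleton [FiniteDimensional K V]
    [FiniteDimensional K W] (hVW : finrank K W + 1 = finrank K V) {v : V} (hv : v ≠ 0) :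
    ∃ L : V →ₗ[K] W, LinearMap.ker L = K ∙ v := by
  have hquot : finrank K (V ⧸ K ∙ v) = finrank K W := by
    have := Submodule.finrank_quotient_add_finrank (K ∙ v)
    rw [finrank_span_singleton hv] at this
    omega
  exact ⟨(LinearEquiv.ofFinrankEq _ _ hquot).toLinearMap ∘ₗ (K ∙ v).mkQ, by
    rw [LinearMap.ker_comp, LinearEquiv.ker, Submodule.comap_bot, Submodule.ker_mkQ]⟩

theorem Function.Injective.linearMap_comp_of_ker_le_span_singleton {α : Type*} {f : α → V}
    (hf : Injective f) {L : V →ₗ[K] W} {v : V} (hL : LinearMap.ker L ≤ K ∙ v)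
    (hv : ∀ x y (c : K), c • (f x - f y) ≠ v) : Injective (L ∘ f) := by
  intro x y hxy
  have hker : f x - f y ∈ LinearMap.ker L := by
    rw [LinearMap.mem_ker, map_sub, sub_eq_zero]
    exact hxy
  obtain ⟨c, hc⟩ := Submodule.mem_span_singleton.1 (hL hker)
  by_cases hc0 : c = 0
  · rw [hc0, zero_smul, eq_comm, sub_eq_zero] at hc
    exact hf hc
  · exact (hv x y c⁻¹ (by rw [← hc, smul_smul, inv_mul_cancel₀ hc0, one_smul])).elim

theorem LinearMap.injective_comp_of_ker_le_span_singleton {U : Type*} [AddCommGroup U]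
    [Module K U] {D : U →ₗ[K] V} (hD : Injective D) {L : V →ₗ[K] W} {v : V}
    (hL : LinearMap.ker L ≤ K ∙ v) (hv : v ∉ range D) : Injective (L ∘ₗ D) :=
  hD.linearMap_comp_of_ker_le_span_singleton hL fun x y c h =>
    hv ⟨c • (x - y), by rw [map_smul, map_sub, h]⟩

end LinearAlgebra

theorem ContDiffOn.dimH_image_le_of_isOpen {E F : Type*} [NormedAddCommGroup E]
    [NormedSpace ℝ E] [FiniteDimensional ℝ E] [NormedAddCommGroup F] [NormedSpace ℝ F]
    {f : E → F} {s : Set E} (hf : ContDiffOn ℝ 1 f s) (hs : IsOpen s) :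
    dimH (f '' s) ≤ dimH s :=
  dimH_image_le_of_locally_lipschitzOn fun x hx => by
    obtain ⟨K, t, ht, hlip⟩ := ((hf x hx).contDiffAt (hs.mem_nhds hx)).exists_lipschitzOnWith
    exact ⟨K, t, nhdsWithin_le_nhds ht, hlip⟩

section Manifold

variable {E H M : Type*} [NormedAddCommGroup E] [NormedSpace ℝ E]
  [TopologicalSpace H] {I : ModelWithCorners ℝ E H} [TopologicalSpace M] [ChartedSpace H M]
  {V W : Type*} [NormedAddCommGroup V] [NormedSpace ℝ V] [NormedAddCommGroup W]
  [NormedSpace ℝ W]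

structure IsSmoothInjectiveImmersion (I : ModelWithCorners ℝ E H) (g : M → V) : Prop where
  contMDiff : ContMDiff I 𝓘(ℝ, V) ∞ g
  injective : Injective g
  injective_mfderiv : ∀ x, Injective (mfderiv I 𝓘(ℝ, V) g x)

theorem mfderiv_continuousLinearMap_comp {g : M → V} {x : M}
    (hg : MDifferentiableAt I 𝓘(ℝ, V) g x) (L : V →L[ℝ] W) :
    mfderiv I 𝓘(ℝ, W) (L ∘ g) x = L ∘L mfderiv I 𝓘(ℝ, V) g x := by
  rw [mfderiv_comp x L.mdifferentiableAt hg, L.mfderiv_eq]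
  rfl

theorem IsSmoothInjectiveImmersion.continuousLinearMap_comp {g : M → V}
    (hg : IsSmoothInjectiveImmersion I g) {L : V →L[ℝ] W} (hL : Injective L) :
    IsSmoothInjectiveImmersion I (L ∘ g) where
  contMDiff := L.contMDiff.comp hg.contMDiff
  injective := hL.comp hg.injective
  injective_mfderiv x := by
    rw [mfderiv_continuousLinearMap_comp (hg.contMDiff.mdifferentiableAt (by simp)) L]
    exact hL.comp (hg.injective_mfderiv x)

variable [FiniteDimensional ℝ E]

instance TangentBundle.secondCountableTopology [IsManifold I 1 M] [SecondCountableTopology M] :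
    SecondCountableTopology (TangentBundle I M) := by
  have := I.secondCountableTopology
  have : SecondCountableTopology (ModelProd H E) :=
    inferInstanceAs (SecondCountableTopology (H × E))
  obtain ⟨s, hs, hcover⟩ := TopologicalSpace.countable_cover_nhds fun x : M =>
    chart_source_mem_nhds H x
  refine ChartedSpace.secondCountable_of_countable_cover (ModelProd H E)
    (s := (fun x : M => (⟨x, 0⟩ : TangentBundle I M)) '' s) ?_ (hs.image _)
  refine eq_univ_of_forall fun p => ?_
  have hp : p.1 ∈ ⋃ x ∈ s, (chartAt H x).source := hcover ▸ mem_univ p.1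
  obtain ⟨x, hx, hpx⟩ := mem_iUnion₂.1 hp
  exact mem_iUnion₂.2 ⟨_, mem_image_of_mem _ hx, (TangentBundle.mem_chart_source_iff _ _).2 hpx⟩

variable [I.Boundaryless] [SecondCountableTopology M]

theorem ContMDiff.dimH_range_le [IsManifold I 1 M] {f : M → V}
    (hf : ContMDiff I 𝓘(ℝ, V) 1 f) : dimH (range f) ≤ finrank ℝ E := by
  obtain ⟨s, hs, hcover⟩ := TopologicalSpace.countable_cover_nhds fun x : M =>
    extChartAt_source_mem_nhds (I := I) x
  have hrange : range f = ⋃ x ∈ s, (f ∘ (extChartAt I x).symm) '' (extChartAt I x).target := by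
    simp_rw [image_comp, (extChartAt I _).symm_image_target_eq_source, ← image_iUnion₂, hcover,
      image_univ]
  rw [hrange, dimH_bUnion hs]
  refine iSup₂_le fun x _ => ?_
  have hsmooth : ContDiffOn ℝ 1 (f ∘ (extChartAt I x).symm) (extChartAt I x).target :=
    (hf.comp_contMDiffOn (contMDiffOn_extChartAt_symm x)).contDiffOn
  calc dimH ((f ∘ (extChartAt I x).symm) '' (extChartAt I x).target)
      ≤ dimH (extChartAt I x).target :=
        hsmooth.dimH_image_le_of_isOpen (isOpen_extChartAt_target x)
    _ ≤ dimH (univ : Set E) := dimH_mono (subset_univ _)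
    _ = finrank ℝ E := Real.dimH_univ_eq_finrank E

theorem dimH_range_secant_le [IsManifold I 1 M] {g : M → V} (hg : ContMDiff I 𝓘(ℝ, V) 1 g) :
    dimH (range fun p : M × M × ℝ => p.2.2 • (g p.1 - g p.2.1)) ≤
      2 * finrank ℝ E + 1 := by
  have hsmooth : ContMDiff (I.prod (I.prod 𝓘(ℝ, ℝ))) 𝓘(ℝ, V) 1
      fun p : M × M × ℝ => p.2.2 • (g p.1 - g p.2.1) :=
    contMDiff_snd.snd.smul ((hg.comp contMDiff_fst).sub (hg.comp contMDiff_snd.fst))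
  convert hsmooth.dimH_range_le using 1
  simp only [finrank_prod, finrank_self]
  push_cast
  ring

theorem dimH_range_mfderiv_le [IsManifold I 2 M] {g : M → V} (hg : ContMDiff I 𝓘(ℝ, V) 2 g) :
    dimH (range fun p : TangentBundle I M => mfderiv I 𝓘(ℝ, V) g p.1 p.2) ≤
      2 * finrank ℝ E := by
  have hsmooth : ContMDiff I.tangent 𝓘(ℝ, V) 1
      fun p : TangentBundle I M => mfderiv I 𝓘(ℝ, V) g p.1 p.2 :=
    (contMDiff_snd_tangentBundle_modelSpace V 𝓘(ℝ, V)).comp (hg.contMDiff_tangentMap le_rfl)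
  convert hsmooth.dimH_range_le using 1
  simp only [finrank_prod]
  push_cast
  ring

variable [IsManifold I 2 M]

theorem IsSmoothInjectiveImmersion.exists_of_finrank_add_one_eq [FiniteDimensional ℝ V]
    [FiniteDimensional ℝ W] (hVW : finrank ℝ W + 1 = finrank ℝ V)
    (hdim : 2 * finrank ℝ E + 1 < finrank ℝ V) {g : M → V}
    (hg : IsSmoothInjectiveImmersion I g) :
    ∃ g' : M → W, IsSmoothInjectiveImmersion I g' := by
  set secants := range fun p : M × M × ℝ => p.2.2 • (g p.1 - g p.2.1)
  set tangents := range fun p : TangentBundle I M => mfderiv I 𝓘(ℝ, V) g p.1 p.2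
  have hsmall : dimH (secants ∪ tangents) < finrank ℝ V := by
    rw [dimH_union]
    refine max_lt ((dimH_range_secant_le (hg.contMDiff.of_le (by decide))).trans_lt ?_)
      ((dimH_range_mfderiv_le (hg.contMDiff.of_le (by decide))).trans_lt ?_) <;>
    exact_mod_cast (by omega)
  have : Nontrivial V := Module.nontrivial_of_finrank_pos (R := ℝ) (by omega)
  obtain ⟨v, hv, hv0⟩ : ∃ v, v ∉ secants ∪ tangents ∧ v ≠ 0 :=
    ((dense_compl_of_dimH_lt_finrank hsmall).sdiff_singleton 0).nonempty
  obtain ⟨L, hL⟩ := exists_linearMap_ker_eq_span_singleton hVW hv0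
  refine ⟨LinearMap.toContinuousLinearMap L ∘ g,
    L.toContinuousLinearMap.contMDiff.comp hg.contMDiff,
    hg.injective.linearMap_comp_of_ker_le_span_singleton hL.le fun x y c h =>
      hv (Or.inl ⟨(x, y, c), h⟩), fun x => ?_⟩
  rw [mfderiv_continuousLinearMap_comp (hg.contMDiff.mdifferentiableAt (by simp))]
  exact LinearMap.injective_comp_of_ker_le_span_singleton (hg.injective_mfderiv x) hL.le
    fun ⟨u, hu⟩ => hv (Or.inr ⟨⟨x, u⟩, hu⟩)

theorem IsSmoothInjectiveImmersion.exists_euclidean_of_le {m N : ℕ}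
    (hm : 2 * finrank ℝ E + 1 ≤ m) (hmN : m ≤ N) {g : M → EuclideanSpace ℝ (Fin N)}
    (hg : IsSmoothInjectiveImmersion I g) :
    ∃ g' : M → EuclideanSpace ℝ (Fin m), IsSmoothInjectiveImmersion I g' := by
  induction N, hmN using Nat.le_induction with
  | base => exact ⟨g, hg⟩
  | succ N hmN ih =>
    obtain ⟨g', hg'⟩ := hg.exists_of_finrank_add_one_eq (W := EuclideanSpace ℝ (Fin N))
      (by simp) (by simp; omega)
    exact ih hg'

end Manifold

theorem stmt0_general (n : ℕ) (r : ℕ∞) (M : Type*) [TopologicalSpace M]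
    [ChartedSpace (EuclideanSpace ℝ (Fin n)) M]
    [IsManifold (𝓡 n) (⊤ : ℕ∞) M] [CompactSpace M] [T2Space M] :
    ∃ f : M → EuclideanSpace ℝ (Fin (2 * n + 1)),
      ContMDiff (𝓡 n) 𝓘(ℝ, EuclideanSpace ℝ (Fin (2 * n + 1))) r f ∧
      Topology.IsEmbedding f ∧
      ∀ x : M, Function.Injective
        (mfderiv (𝓡 n) 𝓘(ℝ, EuclideanSpace ℝ (Fin (2 * n + 1))) f x) := by
  have := ChartedSpace.secondCountable_of_sigmaCompact (EuclideanSpace ℝ (Fin n)) M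
  obtain ⟨N, e, he, hemb, himm⟩ := exists_embedding_euclidean_of_compact (I := 𝓡 n) (M := M)
  obtain ⟨L, hL⟩ := Module.Free.exists_linearMap_injective_of_rank_lt (R := ℝ)
    (M := EuclideanSpace ℝ (Fin N)) (N := EuclideanSpace ℝ (Fin (N + (2 * n + 1))))
    (by simp only [← Module.finrank_eq_rank, finrank_euclideanSpace_fin]; exact_mod_cast (by omega))
  have hLe : IsSmoothInjectiveImmersion (𝓡 n) (LinearMap.toContinuousLinearMap L ∘ e) :=
    IsSmoothInjectiveImmersion.continuousLinearMap_comp ⟨he, hemb.injective, himm⟩ hL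
  obtain ⟨f, hf⟩ := hLe.exists_euclidean_of_le (m := 2 * n + 1) (by simp) (by omega)
  exact ⟨f, hf.contMDiff.of_le (by exact_mod_cast le_top),
    (hf.contMDiff.continuous.isClosedEmbedding hf.injective).isEmbedding, hf.injective_mfderiv⟩

/-- **Whitney's embedding theorem.** A compact (Hausdorff) `C^r` manifold `M`
of dimension `n` without boundary, `2 ≤ r ≤ ∞`, admits a `C^r` embedding into
`ℝ^(2n+1)`: there is a map `f : M → ℝ^(2n+1)` that is `C^r`, a topological
embedding, and an immersion (its differential is injective at every point). -/
theorem stmt0 (n : ℕ) (r : ℕ∞) (hr : 2 ≤ r) (M : Type*) [TopologicalSpace M]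
    [ChartedSpace (EuclideanSpace ℝ (Fin n)) M]
    [IsManifold (𝓡 n) (⊤ : ℕ∞) M] [CompactSpace M] [T2Space M] :
    ∃ f : M → EuclideanSpace ℝ (Fin (2 * n + 1)),
      ContMDiff (𝓡 n) 𝓘(ℝ, EuclideanSpace ℝ (Fin (2 * n + 1))) r f ∧
      Topology.IsEmbedding f ∧
      ∀ x : M, Function.Injective
        (mfderiv (𝓡 n) 𝓘(ℝ, EuclideanSpace ℝ (Fin (2 * n + 1))) f x) :=
  stmt0_general n r M
end

section
/- Let M be a compact smooth (C^∞) manifold of dimension n without boundary, and let f : M → ℝ^m be a smooth embedding (a smooth injective immersion that is a homeomorphism onto its image) with m ≥ 2n + 2. Then there exists a linear map L : ℝ^m → ℝ^{2n+1} such that L ∘ f is injective and is an immersion, i.e., no secant vector f(x) − f(y) with x ≠ y is mapped to zero by L and no nonzero tangent vector (mfderiv of f applied at any point) is mapped to zero by L. -/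
/-!
Whitney's projection argument. The secants `t • (f x - f y)` and the tangent vectors of `f` form a
cone which, read in charts, is covered by countably many differentiable images of `ℝ × ℝⁿ × ℝⁿ`
and `ℝⁿ × ℝⁿ`, spaces of dimension at most `2n + 1`. So after any linear map into `ℝ^k` with
`k > 2n + 1` the cone is Lebesgue-null, some direction `v` avoids it, and projecting along `v`
drops one dimension while keeping every nonzero element of the cone nonzero. Repeating this from
`ℝ^m` down to `ℝ^(2n+1)` gives `L`.
-/

open MeasureTheory Set Module
open scoped Manifold

section LinearAlgebra

theorem exists_linearMap_ker_eq_span {K V W : Type*} [Field K] [AddCommGroup V] [Module K V]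
    [FiniteDimensional K V] [AddCommGroup W] [Module K W] [FiniteDimensional K W] {v : V}
    (hv : v ≠ 0) (hVW : finrank K W + 1 = finrank K V) :
    ∃ π : V →ₗ[K] W, LinearMap.ker π = K ∙ v := by
  have hquot : finrank K (V ⧸ K ∙ v) = finrank K W := by
    have := (K ∙ v).finrank_quotient_add_finrank
    rw [finrank_span_singleton hv] at this
    omega
  exact ⟨(LinearEquiv.ofFinrankEq _ _ hquot).toLinearMap ∘ₗ (K ∙ v).mkQ, by
    rw [LinearEquiv.ker_comp, Submodule.ker_mkQ]⟩

variable {V : Type*} [NormedAddCommGroup V] [NormedSpace ℝ V] [FiniteDimensional ℝ V]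

/-- Project along a direction `v` outside the null set `C ∪ {0}`; a nonzero `w ∈ C` killed by
the projection would be a multiple of `v`, putting `v` in the cone `C`. -/
theorem exists_linearMap_ne_zero_on_cone_of_null {W : Type*} [AddCommGroup W] [Module ℝ W]
    [FiniteDimensional ℝ W] (hVW : finrank ℝ W + 1 = finrank ℝ V) [MeasurableSpace V]
    [BorelSpace V] (μ : Measure V) [μ.IsAddHaarMeasure] {C : Set V}
    (hcone : ∀ t : ℝ, ∀ w ∈ C, t • w ∈ C) (hC : μ C = 0) :
    ∃ π : V →ₗ[ℝ] W, ∀ w ∈ C, w ≠ 0 → π w ≠ 0 := by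
  have : Nontrivial V := Module.nontrivial_of_finrank_pos (R := ℝ) (by omega)
  have hnull : μ (C ∪ {0}) = 0 := measure_union_null hC (measure_singleton 0)
  obtain ⟨v, hv⟩ : (C ∪ {0})ᶜ.Nonempty := by
    refine nonempty_compl.2 fun huniv => ?_
    rw [huniv, Measure.measure_univ_eq_zero] at hnull
    exact (NeZero.ne μ) hnull
  simp only [mem_compl_iff, mem_union, mem_singleton_iff, not_or] at hv
  obtain ⟨π, hπ⟩ := exists_linearMap_ker_eq_span (W := W) hv.2 hVW
  refine ⟨π, fun w hw hw0 hπw => ?_⟩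
  obtain ⟨c, rfl⟩ := Submodule.mem_span_singleton.1 (hπ ▸ LinearMap.mem_ker.2 hπw)
  have hc : c ≠ 0 := by rintro rfl; simp at hw0
  exact hv.1 (by simpa [smul_smul, inv_mul_cancel₀ hc] using hcone c⁻¹ _ hw)

theorem exists_linearMap_euclideanSpace_ne_zero_on_cone {C : Set V}
    (hcone : ∀ t : ℝ, ∀ w ∈ C, t • w ∈ C) {d : ℕ} (hd : d ≤ finrank ℝ V)
    (hnull : ∀ k, d < k → ∀ L : V →ₗ[ℝ] EuclideanSpace ℝ (Fin k), volume (L '' C) = 0) :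
    ∃ L : V →ₗ[ℝ] EuclideanSpace ℝ (Fin d), ∀ w ∈ C, w ≠ 0 → L w ≠ 0 := by
  induction hd using Nat.decreasingInduction with
  | self =>
    refine ⟨(LinearEquiv.ofFinrankEq _ _ finrank_euclideanSpace_fin.symm).toLinearMap,
      fun w _ hw => ?_⟩
    simpa using hw
  | of_succ k hk ih =>
    obtain ⟨L, hL⟩ := ih fun j hj => hnull j (by omega)
    have hLcone : ∀ t : ℝ, ∀ w ∈ L '' C, t • w ∈ L '' C := by
      rintro t _ ⟨w, hw, rfl⟩
      exact ⟨t • w, hcone t w hw, map_smul L t w⟩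
    obtain ⟨π, hπ⟩ := exists_linearMap_ne_zero_on_cone_of_null (W := EuclideanSpace ℝ (Fin k))
      (by simp) volume hLcone (hnull _ (by omega) L)
    exact ⟨π ∘ₗ L, fun w hw hw0 => hπ _ (mem_image_of_mem L hw) (hL w hw hw0)⟩

end LinearAlgebra

/-- Precomposing `G` with a linear surjection `P : F → E` gives a map `F → F` with the same image
whose derivative kills `ker P ≠ 0`, so the fixed-dimension Sard lemma applies. -/
theorem addHaar_image_eq_zero_of_finrank_lt {E F : Type*} [NormedAddCommGroup E]
    [NormedSpace ℝ E] [FiniteDimensional ℝ E] [NormedAddCommGroup F] [NormedSpace ℝ F]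
    [FiniteDimensional ℝ F] [MeasurableSpace F] [BorelSpace F] (μ : Measure F)
    [μ.IsAddHaarMeasure] (hEF : finrank ℝ E < finrank ℝ F) {G : E → F} {s : Set E}
    (hG : DifferentiableOn ℝ G s) : μ (G '' s) = 0 := by
  obtain ⟨J, hJ⟩ := finrank_le_iff_exists_linearMap.1 hEF.le
  obtain ⟨P, hPJ⟩ := J.exists_leftInverse_of_injective (LinearMap.ker_eq_bot.2 hJ)
  let Pc : F →L[ℝ] E := LinearMap.toContinuousLinearMap P
  have hPJ' : ∀ a, P (J a) = a := fun a => LinearMap.congr_fun hPJ a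
  have himage : G '' s ⊆ (G ∘ Pc) '' (Pc ⁻¹' s) := by
    rintro _ ⟨a, ha, rfl⟩
    exact ⟨J a, by simpa [Pc, hPJ'] using ha, by simp [Pc, hPJ']⟩
  refine measure_mono_null himage
    (addHaar_image_eq_zero_of_det_fderivWithin_eq_zero μ
      (f' := fun z => (fderivWithin ℝ G s (Pc z)).comp Pc) (fun z hz => ?_) fun z _ => ?_)
  · exact (hG _ hz).hasFDerivWithinAt.comp z Pc.hasFDerivWithinAt (mapsTo_preimage _ _)
  · rw [ContinuousLinearMap.det, LinearMap.det_eq_zero_iff_ker_ne_bot]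
    refine ne_bot_of_le_ne_bot (LinearMap.ker_ne_bot_of_finrank_lt (f := P) hEF) ?_
    intro w hw
    simp_all [Pc]

theorem ChartedSpace.exists_countable_chart_cover (H : Type*) {M : Type*} [TopologicalSpace H]
    [TopologicalSpace M] [ChartedSpace H M] [LindelofSpace M] :
    ∃ s : Set M, s.Countable ∧ ∀ x, ∃ p ∈ s, x ∈ (chartAt H p).source := by
  obtain ⟨s, hs, hcover⟩ := countable_cover_nhds fun x : M => chart_source_mem_nhds H x
  exact ⟨s, hs, fun x => by simpa using hcover.ge (mem_univ x)⟩

section SecantTangentCone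

variable {E H F V M : Type*} [NormedAddCommGroup E] [NormedSpace ℝ E] [TopologicalSpace H]
  (I : ModelWithCorners ℝ E H) [NormedAddCommGroup F] [NormedSpace ℝ F]
  [NormedAddCommGroup V] [NormedSpace ℝ V] [TopologicalSpace M] [ChartedSpace H M]

def secantTangentCone (f : M → F) : Set F :=
  {v | ∃ (t : ℝ) (x y : M), t • (f x - f y) = v} ∪
    {v | ∃ (x : M) (u : TangentSpace I x), mfderiv I 𝓘(ℝ, F) f x u = v}

variable {I}

theorem smul_mem_secantTangentCone {f : M → F} {v : F} (t : ℝ)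
    (hv : v ∈ secantTangentCone I f) : t • v ∈ secantTangentCone I f := by
  rcases hv with ⟨s, x, y, rfl⟩ | ⟨x, u, rfl⟩
  · exact Or.inl ⟨t * s, x, y, mul_smul t s _⟩
  · exact Or.inr ⟨x, t • u, map_smul _ t u⟩

theorem mfderiv_linearMap_comp_apply [FiniteDimensional ℝ F] (L : F →ₗ[ℝ] V) {f : M → F} {x : M}
    (hf : MDifferentiableAt I 𝓘(ℝ, F) f x) (u : TangentSpace I x) :
    mfderiv I 𝓘(ℝ, V) (fun y => L (f y)) x u = L (mfderiv I 𝓘(ℝ, F) f x u) := by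
  have hchain := mfderiv_comp_apply x
    (LinearMap.toContinuousLinearMap L).mdifferentiableAt hf u
  rwa [ContinuousLinearMap.mfderiv_eq] at hchain

theorem image_secantTangentCone_subset [FiniteDimensional ℝ F] (L : F →ₗ[ℝ] V) {f : M → F}
    (hf : MDifferentiable I 𝓘(ℝ, F) f) :
    L '' secantTangentCone I f ⊆ secantTangentCone I (fun x => L (f x)) := by
  rintro _ ⟨_, ⟨t, x, y, rfl⟩ | ⟨x, u, rfl⟩, rfl⟩
  · exact Or.inl ⟨t, x, y, by simp only [map_smul, map_sub]⟩
  · exact Or.inr ⟨x, u, mfderiv_linearMap_comp_apply L (hf x) u⟩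

end SecantTangentCone

section BoundarylessCharts

variable {E : Type*} [NormedAddCommGroup E] [NormedSpace ℝ E]
  {F : Type*} [NormedAddCommGroup F] [NormedSpace ℝ F]
  {M : Type*} [TopologicalSpace M] [ChartedSpace E M]

theorem ContMDiff.contDiffOn_comp_extChartAt_symm {n : WithTop ℕ∞} [IsManifold 𝓘(ℝ, E) n M]
    {f : M → F} (hf : ContMDiff 𝓘(ℝ, E) 𝓘(ℝ, F) n f) (p : M) :
    ContDiffOn ℝ n (f ∘ (extChartAt 𝓘(ℝ, E) p).symm) (extChartAt 𝓘(ℝ, E) p).target :=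
  contMDiffOn_iff_contDiffOn.1 (hf.comp_contMDiffOn (contMDiffOn_extChartAt_symm p))

theorem mfderiv_eq_fderiv_comp_extChartAt_symm [IsManifold 𝓘(ℝ, E) 1 M] {f : M → F} {p x : M}
    (hf : MDifferentiableAt 𝓘(ℝ, E) 𝓘(ℝ, F) f x) (hx : x ∈ (chartAt E p).source)
    (u : TangentSpace 𝓘(ℝ, E) x) :
    mfderiv 𝓘(ℝ, E) 𝓘(ℝ, F) f x u =
      fderiv ℝ (f ∘ (extChartAt 𝓘(ℝ, E) p).symm) (extChartAt 𝓘(ℝ, E) p x)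
        (mfderiv 𝓘(ℝ, E) 𝓘(ℝ, E) (extChartAt 𝓘(ℝ, E) p) x u) := by
  set φ := extChartAt 𝓘(ℝ, E) p
  have hxφ : x ∈ φ.source := by rwa [extChartAt_source]
  have hlocal : f =ᶠ[nhds x] (f ∘ φ.symm) ∘ φ := by
    filter_upwards [extChartAt_source_mem_nhds' hxφ] with y hy
    simp only [Function.comp_apply, φ.left_inv hy]
  have hsymm : MDifferentiableAt 𝓘(ℝ, E) 𝓘(ℝ, E) φ.symm (φ x) :=
    (mdifferentiableWithinAt_extChartAt_symm (φ.map_source hxφ)).mdifferentiableAt (by simp)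
  have hcomp : MDifferentiableAt 𝓘(ℝ, E) 𝓘(ℝ, F) (f ∘ φ.symm) (φ x) := by
    refine MDifferentiableAt.comp _ ?_ hsymm
    rwa [φ.left_inv hxφ]
  have hchain := mfderiv_comp_apply x hcomp (mdifferentiableAt_extChartAt hx) u
  rw [mfderiv_eq_fderiv] at hchain
  exact (DFunLike.congr_fun hlocal.mfderiv_eq u).trans hchain

variable [FiniteDimensional ℝ E] [FiniteDimensional ℝ F] [MeasurableSpace F] [BorelSpace F]
  (μ : Measure F) [μ.IsAddHaarMeasure] [LindelofSpace M]

theorem addHaar_secants_eq_zero [IsManifold 𝓘(ℝ, E) 1 M] {f : M → F}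
    (hf : ContMDiff 𝓘(ℝ, E) 𝓘(ℝ, F) 1 f) (hdim : 2 * finrank ℝ E + 1 < finrank ℝ F) :
    μ {v | ∃ (t : ℝ) (x y : M), t • (f x - f y) = v} = 0 := by
  obtain ⟨s, hs, hcover⟩ := ChartedSpace.exists_countable_chart_cover E (M := M)
  let φ : M → PartialEquiv M E := extChartAt 𝓘(ℝ, E)
  let G : M → M → ℝ × E × E → F := fun p q z =>
    z.1 • (f ((φ p).symm z.2.1) - f ((φ q).symm z.2.2))
  have hsub : {v | ∃ (t : ℝ) (x y : M), t • (f x - f y) = v} ⊆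
      ⋃ p ∈ s, ⋃ q ∈ s, G p q '' (univ ×ˢ (φ p).target ×ˢ (φ q).target) := by
    rintro _ ⟨t, x, y, rfl⟩
    obtain ⟨p, hp, hxp⟩ := hcover x
    obtain ⟨q, hq, hyq⟩ := hcover y
    rw [← extChartAt_source 𝓘(ℝ, E)] at hxp hyq
    refine mem_biUnion hp (mem_biUnion hq ⟨(t, φ p x, φ q y),
      ⟨mem_univ t, (φ p).map_source hxp, (φ q).map_source hyq⟩, ?_⟩)
    simp only [G, (φ p).left_inv hxp, (φ q).left_inv hyq]
  refine measure_mono_null hsub <| (measure_biUnion_null_iff hs).2 fun p _ =>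
    (measure_biUnion_null_iff hs).2 fun q _ => addHaar_image_eq_zero_of_finrank_lt μ ?_ ?_
  · rw [finrank_prod, finrank_prod, finrank_self]
    omega
  · have hdiff : ∀ r, DifferentiableOn ℝ (f ∘ (φ r).symm) (φ r).target := fun r =>
      (hf.contDiffOn_comp_extChartAt_symm r).differentiableOn one_ne_zero
    exact differentiableOn_fst.smul
      (((hdiff p).comp differentiableOn_snd.fst fun z hz => hz.2.1).sub
        ((hdiff q).comp differentiableOn_snd.snd fun z hz => hz.2.2))

theorem addHaar_tangents_eq_zero [IsManifold 𝓘(ℝ, E) 2 M] {f : M → F}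
    (hf : ContMDiff 𝓘(ℝ, E) 𝓘(ℝ, F) 2 f) (hdim : 2 * finrank ℝ E < finrank ℝ F) :
    μ {v | ∃ (x : M) (u : TangentSpace 𝓘(ℝ, E) x), mfderiv 𝓘(ℝ, E) 𝓘(ℝ, F) f x u = v} = 0 := by
  obtain ⟨s, hs, hcover⟩ := ChartedSpace.exists_countable_chart_cover E (M := M)
  let φ : M → PartialEquiv M E := extChartAt 𝓘(ℝ, E)
  let T : M → E × E → F := fun p z => fderiv ℝ (f ∘ (φ p).symm) z.1 z.2
  have hsub : {v | ∃ (x : M) (u : TangentSpace 𝓘(ℝ, E) x),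
      mfderiv 𝓘(ℝ, E) 𝓘(ℝ, F) f x u = v} ⊆ ⋃ p ∈ s, T p '' ((φ p).target ×ˢ univ) := by
    rintro _ ⟨x, u, rfl⟩
    obtain ⟨p, hp, hxp⟩ := hcover x
    refine mem_biUnion hp ⟨(φ p x, mfderiv 𝓘(ℝ, E) 𝓘(ℝ, E) (φ p) x u),
      ⟨(φ p).map_source (by rwa [extChartAt_source]), mem_univ _⟩, ?_⟩
    exact (mfderiv_eq_fderiv_comp_extChartAt_symm
      (hf.mdifferentiableAt two_ne_zero) hxp u).symm
  refine measure_mono_null hsub <| (measure_biUnion_null_iff hs).2 fun p _ =>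
    addHaar_image_eq_zero_of_finrank_lt μ ?_ ?_
  · rw [finrank_prod]
    omega
  · have hderiv : DifferentiableOn ℝ (fderiv ℝ (f ∘ (φ p).symm)) (φ p).target :=
      ((hf.contDiffOn_comp_extChartAt_symm p).fderiv_of_isOpen (isOpen_extChartAt_target p)
        le_rfl).differentiableOn one_ne_zero
    exact (hderiv.comp differentiableOn_fst fun z hz => hz.1).clm_apply differentiableOn_snd

theorem addHaar_secantTangentCone_eq_zero [IsManifold 𝓘(ℝ, E) 2 M] {f : M → F}
    (hf : ContMDiff 𝓘(ℝ, E) 𝓘(ℝ, F) 2 f) (hdim : 2 * finrank ℝ E + 1 < finrank ℝ F) :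
    μ (secantTangentCone 𝓘(ℝ, E) f) = 0 :=
  measure_union_null (addHaar_secants_eq_zero μ (hf.of_le one_le_two) hdim)
    (addHaar_tangents_eq_zero μ hf (by omega))

end BoundarylessCharts

theorem stmt1_general (n m : ℕ) (hm : 2 * n + 2 ≤ m) (M : Type*) [TopologicalSpace M]
    [ChartedSpace (EuclideanSpace ℝ (Fin n)) M]
    [IsManifold (𝓡 n) (⊤ : ℕ∞) M] [CompactSpace M]
    (f : M → EuclideanSpace ℝ (Fin m))
    (hf_smooth : ContMDiff (𝓡 n) 𝓘(ℝ, EuclideanSpace ℝ (Fin m)) (⊤ : ℕ∞) f)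
    (hf_emb : Topology.IsEmbedding f)
    (hf_imm : ∀ x : M, Function.Injective
      (mfderiv (𝓡 n) 𝓘(ℝ, EuclideanSpace ℝ (Fin m)) f x)) :
    ∃ L : EuclideanSpace ℝ (Fin m) →ₗ[ℝ] EuclideanSpace ℝ (Fin (2 * n + 1)),
      Function.Injective (fun x : M => L (f x)) ∧
      (∀ x : M, Function.Injective
        (mfderiv (𝓡 n) 𝓘(ℝ, EuclideanSpace ℝ (Fin (2 * n + 1)))
          (fun x : M => L (f x)) x)) ∧
      (∀ x y : M, x ≠ y → L (f x - f y) ≠ 0) ∧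
      (∀ (x : M) (u : TangentSpace (𝓡 n) x),
        mfderiv (𝓡 n) 𝓘(ℝ, EuclideanSpace ℝ (Fin m)) f x u ≠ 0 →
        L (mfderiv (𝓡 n) 𝓘(ℝ, EuclideanSpace ℝ (Fin m)) f x u) ≠ 0) := by
  have hf : ContMDiff (𝓡 n) 𝓘(ℝ, EuclideanSpace ℝ (Fin m)) 2 f :=
    hf_smooth.of_le (WithTop.coe_le_coe.2 le_top)
  obtain ⟨L, hL⟩ := exists_linearMap_euclideanSpace_ne_zero_on_cone
    (fun t _ hv => smul_mem_secantTangentCone t hv) (d := 2 * n + 1) (by simp; omega)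
    fun k hk L => measure_mono_null
      (image_secantTangentCone_subset L (hf.mdifferentiable two_ne_zero))
      (addHaar_secantTangentCone_eq_zero volume
        ((LinearMap.toContinuousLinearMap L).contDiff.contMDiff.comp hf) (by simp; omega))
  have hsec : ∀ x y : M, x ≠ y → L (f x - f y) ≠ 0 := fun x y hxy =>
    hL _ (Or.inl ⟨1, x, y, one_smul ℝ _⟩) (sub_ne_zero.2 (hf_emb.injective.ne hxy))
  have htan : ∀ (x : M) (u : TangentSpace (𝓡 n) x),
      mfderiv (𝓡 n) 𝓘(ℝ, EuclideanSpace ℝ (Fin m)) f x u ≠ 0 →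
      L (mfderiv (𝓡 n) 𝓘(ℝ, EuclideanSpace ℝ (Fin m)) f x u) ≠ 0 :=
    fun x u => hL _ (Or.inr ⟨x, u, rfl⟩)
  refine ⟨L, fun x y hxy => ?_, fun x => ?_, hsec, htan⟩
  · by_contra hne
    exact hsec x y hne (by rw [map_sub, sub_eq_zero]; exact hxy)
  · refine (injective_iff_map_eq_zero _).2 fun u hu => ?_
    rw [mfderiv_linearMap_comp_apply L (hf.mdifferentiableAt two_ne_zero)] at hu
    by_contra hu0
    exact htan x u ((map_ne_zero_iff _ (hf_imm x)).2 hu0) hu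

/-- If `f : M → ℝ^m` is a smooth embedding of a compact smooth `n`-manifold
without boundary and `m ≥ 2n + 2`, then there is a linear map
`L : ℝ^m → ℝ^(2n+1)` such that `L ∘ f` is injective and an immersion;
i.e., `L` kills no secant `f x - f y` (`x ≠ y`) and no nonzero tangent vector
`mfderiv f x u`. -/
theorem stmt1 (n m : ℕ) (hm : 2 * n + 2 ≤ m) (M : Type*) [TopologicalSpace M]
    [ChartedSpace (EuclideanSpace ℝ (Fin n)) M]
    [IsManifold (𝓡 n) (⊤ : ℕ∞) M] [CompactSpace M] [T2Space M]
    (f : M → EuclideanSpace ℝ (Fin m))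
    (hf_smooth : ContMDiff (𝓡 n) 𝓘(ℝ, EuclideanSpace ℝ (Fin m)) (⊤ : ℕ∞) f)
    (hf_emb : Topology.IsEmbedding f)
    (hf_imm : ∀ x : M, Function.Injective
      (mfderiv (𝓡 n) 𝓘(ℝ, EuclideanSpace ℝ (Fin m)) f x)) :
    ∃ L : EuclideanSpace ℝ (Fin m) →ₗ[ℝ] EuclideanSpace ℝ (Fin (2 * n + 1)),
      Function.Injective (fun x : M => L (f x)) ∧
      (∀ x : M, Function.Injective
        (mfderiv (𝓡 n) 𝓘(ℝ, EuclideanSpace ℝ (Fin (2 * n + 1)))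
          (fun x : M => L (f x)) x)) ∧
      (∀ x y : M, x ≠ y → L (f x - f y) ≠ 0) ∧
      (∀ (x : M) (u : TangentSpace (𝓡 n) x),
        mfderiv (𝓡 n) 𝓘(ℝ, EuclideanSpace ℝ (Fin m)) f x u ≠ 0 →
        L (mfderiv (𝓡 n) 𝓘(ℝ, EuclideanSpace ℝ (Fin m)) f x u) ≠ 0) :=
  stmt1_general n m hm M f hf_smooth hf_emb hf_imm
end

section
/- Let Σ be a nonempty finite set of unit vectors in ℝ^m and define D_Σ(p) = max_{σ ∈ Σ} |1 − ‖pᵀ σ‖₂²| for m × k real matrices p. Then D_Σ is Lipschitz with Lipschitz constant 2 on the set {p : pᵀ p = I_k} of matrices with orthonormal columns, with respect to the Frobenius norm: for all p, q with pᵀ p = I_k and qᵀ q = I_k, |D_Σ(p) − D_Σ(q)| ≤ 2 ‖p − q‖_F. -/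
/-!
For a unit secant `σ`, both `a = ‖pᵀ σ‖` and `b = ‖qᵀ σ‖` lie in `[0, 1]`, since `pᵀ` is a
contraction: in the operator norm `‖p‖² = ‖pᵀ p‖ = ‖1‖ ≤ 1`. Hence
`| |1 - a²| - |1 - b²| | ≤ (a + b) |a - b| ≤ 2 ‖(p - q)ᵀ σ‖ ≤ 2 ‖p - q‖_F`, and a maximum of
functions that are pointwise this close is itself this close.
-/

open Matrix

theorem Finset.abs_sup'_sub_sup'_le {ι α : Type*} [AddCommGroup α] [LinearOrder α]
    [IsOrderedAddMonoid α] {s : Finset ι} (hs : s.Nonempty) {f g : ι → α}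
    {c : α} (hfg : ∀ i ∈ s, |f i - g i| ≤ c) : |s.sup' hs f - s.sup' hs g| ≤ c := by
  have sup'_le_sup'_add : ∀ {f g : ι → α}, (∀ i ∈ s, |f i - g i| ≤ c) →
      s.sup' hs f ≤ s.sup' hs g + c := fun {f g} hfg =>
    Finset.sup'_le _ _ fun i hi =>
      calc f i ≤ g i + c := sub_le_iff_le_add'.mp ((le_abs_self _).trans (hfg i hi))
        _ ≤ s.sup' hs g + c := by gcongr; exact Finset.le_sup' g hi
  rw [abs_sub_le_iff, sub_le_iff_le_add', sub_le_iff_le_add']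
  exact ⟨sup'_le_sup'_add hfg,
    sup'_le_sup'_add fun i hi => (abs_sub_comm (g i) (f i)).trans_le (hfg i hi)⟩

theorem abs_abs_one_sub_sq_sub_abs_one_sub_sq_le {x y : ℝ} (hx₀ : 0 ≤ x) (hx₁ : x ≤ 1)
    (hy₀ : 0 ≤ y) (hy₁ : y ≤ 1) : |(|1 - x ^ 2| - |1 - y ^ 2|)| ≤ 2 * |x - y| :=
  calc |(|1 - x ^ 2| - |1 - y ^ 2|)| ≤ |(1 - x ^ 2) - (1 - y ^ 2)| := abs_abs_sub_abs_le _ _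
    _ = |x + y| * |x - y| := by rw [← abs_mul, abs_sub_comm]; ring_nf
    _ ≤ 2 * |x - y| := by gcongr; rw [abs_of_nonneg (by linarith)]; linarith

namespace Matrix

section Frobenius

attribute [local instance] Matrix.frobeniusNormedAddCommGroup

variable {m n : Type*} [Fintype m] [Fintype n]

theorem frobenius_norm_eq_sqrt_trace (A : Matrix m n ℝ) : ‖A‖ = √(Aᵀ * A).trace := by
  rw [frobenius_norm_def, ← Real.sqrt_eq_rpow, Finset.sum_comm]
  simp [Matrix.trace, Matrix.mul_apply, Real.norm_eq_abs, sq]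

theorem norm_toEuclideanLin_le_frobenius_norm [DecidableEq n] (A : Matrix m n ℝ)
    (x : EuclideanSpace ℝ n) : ‖toEuclideanLin A x‖ ≤ ‖A‖ * ‖x‖ := by
  have h := frobenius_norm_mul A (replicateCol Unit x.ofLp)
  rwa [← replicateCol_mulVec, frobenius_norm_replicateCol, frobenius_norm_replicateCol] at h

theorem norm_toEuclideanLin_transpose_le_sqrt_trace [DecidableEq m] (A : Matrix m n ℝ)
    (x : EuclideanSpace ℝ m) : ‖toEuclideanLin Aᵀ x‖ ≤ √(Aᵀ * A).trace * ‖x‖ := by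
  simpa only [frobenius_norm_transpose, frobenius_norm_eq_sqrt_trace A] using
    norm_toEuclideanLin_le_frobenius_norm Aᵀ x

end Frobenius

section L2Operator

open scoped Matrix.Norms.L2Operator

variable {m n : Type*} [Fintype m] [Fintype n]

theorem l2_opNorm_le_one_of_transpose_mul_self_eq_one [DecidableEq n] {p : Matrix m n ℝ}
    (hp : pᵀ * p = 1) : ‖p‖ ≤ 1 := by
  have norm_one_le : ‖(1 : Matrix n n ℝ)‖ ≤ 1 := by
    rw [← l2_opNorm_toEuclideanCLM, map_one]
    exact ContinuousLinearMap.norm_id_le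
  have h := l2_opNorm_conjTranspose_mul_self p
  rw [conjTranspose_eq_transpose_of_trivial, hp] at h
  nlinarith [norm_nonneg p]

theorem norm_toEuclideanLin_transpose_le [DecidableEq m] [DecidableEq n] {p : Matrix m n ℝ}
    (hp : pᵀ * p = 1) (x : EuclideanSpace ℝ m) : ‖toEuclideanLin pᵀ x‖ ≤ ‖x‖ := by
  have h := l2_opNorm_mulVec pᵀ x
  rw [← conjTranspose_eq_transpose_of_trivial, l2_opNorm_conjTranspose,
    conjTranspose_eq_transpose_of_trivial] at h
  calc ‖toEuclideanLin pᵀ x‖ ≤ ‖p‖ * ‖x‖ := h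
    _ ≤ 1 * ‖x‖ := by gcongr; exact l2_opNorm_le_one_of_transpose_mul_self_eq_one hp
    _ = ‖x‖ := one_mul _

end L2Operator

end Matrix

/-- The distortion function `D_Σ(p) = max_{σ ∈ Σ} |1 - ‖pᵀ σ‖²|` is
Lipschitz with constant 2 on the set of `m × k` matrices with orthonormal
columns, with respect to the Frobenius norm `‖A‖_F = √(Tr (Aᵀ A))`. -/
theorem stmt3 (m k : ℕ) (S : Finset (EuclideanSpace ℝ (Fin m)))
    (hS : S.Nonempty) (hunit : ∀ σ ∈ S, ‖σ‖ = 1)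
    (D : Matrix (Fin m) (Fin k) ℝ → ℝ)
    (hD : ∀ p, D p = S.sup' hS fun σ => |1 - ‖Matrix.toEuclideanLin pᵀ σ‖ ^ 2|)
    (p q : Matrix (Fin m) (Fin k) ℝ)
    (hp : pᵀ * p = 1) (hq : qᵀ * q = 1) :
    |D p - D q| ≤ 2 * Real.sqrt (((p - q)ᵀ * (p - q)).trace) := by
  rw [hD p, hD q]
  refine Finset.abs_sup'_sub_sup'_le hS fun σ hσ => ?_
  have hpσ := (norm_toEuclideanLin_transpose_le hp σ).trans_eq (hunit σ hσ)
  have hqσ := (norm_toEuclideanLin_transpose_le hq σ).trans_eq (hunit σ hσ)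
  calc _ ≤ 2 * |‖toEuclideanLin pᵀ σ‖ - ‖toEuclideanLin qᵀ σ‖| :=
        abs_abs_one_sub_sq_sub_abs_one_sub_sq_le (norm_nonneg _) hpσ (norm_nonneg _) hqσ
    _ ≤ 2 * ‖toEuclideanLin (p - q)ᵀ σ‖ := by
        rw [transpose_sub, map_sub, LinearMap.sub_apply]
        gcongr
        exact abs_norm_sub_norm_le _ _
    _ ≤ 2 * (√(((p - q)ᵀ * (p - q)).trace) * ‖σ‖) := by
        gcongr
        exact norm_toEuclideanLin_transpose_le_sqrt_trace (p - q) σ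
    _ = 2 * √(((p - q)ᵀ * (p - q)).trace) := by rw [hunit σ hσ, mul_one]
end

section
/- Let p and U be m × k real matrices with pᵀ p = I_k and Uᵀ U = I_k, let V be a k × k real orthogonal matrix (Vᵀ V = I_k), and let Θ = diag(θ₁, …, θ_k) be a k × k diagonal matrix with nonnegative entries such that pᵀ U Θ = 0. Define cos Θ = diag(cos θ₁, …, cos θ_k) and sin Θ = diag(sin θ₁, …, sin θ_k), and set q = (p V cos Θ + U sin Θ) Vᵀ. Then qᵀ q = I_k; that is, the exponential map formula produces a matrix with orthonormal columns, hence a point of the Stiefel/Grassmannian manifold. -/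
open Matrix

/-- The closed-form exponential map on the Grassmannian: if `p` and `U` have
orthonormal columns, `V` is orthogonal, `Θ = diagonal θ` has nonnegative entries
and `pᵀ U Θ = 0` (tangency of `ω = U Θ Vᵀ` at `p`), then
`q = (p V cos Θ + U sin Θ) Vᵀ` again has orthonormal columns. -/
theorem stmt6 (m k : ℕ) (p U : Matrix (Fin m) (Fin k) ℝ)
    (V : Matrix (Fin k) (Fin k) ℝ) (θ : Fin k → ℝ)
    (hp : pᵀ * p = 1) (hU : Uᵀ * U = 1) (hV : Vᵀ * V = 1)
    (hθ : ∀ i, 0 ≤ θ i)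
    (htangent : pᵀ * (U * Matrix.diagonal θ) = 0)
    (q : Matrix (Fin m) (Fin k) ℝ)
    (hq : q = (p * V * Matrix.diagonal (fun i => Real.cos (θ i)) +
               U * Matrix.diagonal (fun i => Real.sin (θ i))) * Vᵀ) :
    qᵀ * q = 1 := by
  set C := Matrix.diagonal (fun i => Real.cos (θ i)) with hC
  set S := Matrix.diagonal (fun i => Real.sin (θ i)) with hS
  -- key fact: pᵀ U sinΘ = 0
  have hsin : pᵀ * (U * S) = 0 := by
    ext i j
    have hij : (pᵀ * U) i j * θ j = 0 := by
      have := congrFun (congrFun htangent i) j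
      rw [← Matrix.mul_assoc] at this
      simpa [Matrix.mul_diagonal] using this
    rw [← Matrix.mul_assoc]
    simp only [hS, Matrix.mul_diagonal, Matrix.zero_apply]
    rcases mul_eq_zero.mp hij with h0 | h0
    · rw [h0, zero_mul]
    · rw [h0, Real.sin_zero, mul_zero]
  have hsinT : S * (Uᵀ * p) = 0 := by
    have := congrArg Matrix.transpose hsin
    simpa [Matrix.transpose_mul, hS, Matrix.diagonal_transpose, Matrix.mul_assoc] using this
  have h1 : ∀ X : Matrix (Fin k) (Fin k) ℝ, pᵀ * (p * X) = X := fun X => by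
    rw [← Matrix.mul_assoc, hp, one_mul]
  have h2 : ∀ X : Matrix (Fin k) (Fin k) ℝ, Uᵀ * (U * X) = X := fun X => by
    rw [← Matrix.mul_assoc, hU, one_mul]
  have hV' : ∀ X : Matrix (Fin k) (Fin k) ℝ, Vᵀ * (V * X) = X := fun X => by
    rw [← Matrix.mul_assoc, hV, one_mul]
  have h3 : ∀ X : Matrix (Fin k) (Fin k) ℝ, pᵀ * (U * (S * X)) = 0 := fun X => by
    rw [← Matrix.mul_assoc, ← Matrix.mul_assoc, Matrix.mul_assoc pᵀ U S, hsin, zero_mul]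
  have h4 : ∀ X : Matrix (Fin k) (Fin k) ℝ, S * (Uᵀ * (p * X)) = 0 := fun X => by
    rw [← Matrix.mul_assoc, ← Matrix.mul_assoc, Matrix.mul_assoc S Uᵀ p, hsinT, zero_mul]
  have hVVt : V * Vᵀ = 1 := mul_eq_one_comm.mp hV
  have hA : (p * V * C + U * S)ᵀ * (p * V * C + U * S) = 1 := by
    have expand : (p * V * C + U * S)ᵀ * (p * V * C + U * S)
        = C * (Vᵀ * (pᵀ * (p * (V * C)))) + S * (Uᵀ * (p * (V * C)))
          + (C * (Vᵀ * (pᵀ * (U * S))) + S * (Uᵀ * (U * S))) := by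
      simp only [Matrix.transpose_add, Matrix.transpose_mul, hC, hS,
        Matrix.diagonal_transpose, Matrix.add_mul, Matrix.mul_add, Matrix.mul_assoc]
    rw [expand, h1, hV', hsin, h4, h2]
    simp only [Matrix.mul_zero, add_zero, zero_add]
    rw [hC, hS, Matrix.diagonal_mul_diagonal, Matrix.diagonal_mul_diagonal,
      Matrix.diagonal_add]
    have hfun : (fun i => Real.cos (θ i) * Real.cos (θ i) +
        Real.sin (θ i) * Real.sin (θ i)) = fun _ : Fin k => (1 : ℝ) := by
      funext i
      rw [← Real.sin_sq_add_cos_sq (θ i)]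
      ring
    rw [hfun, Matrix.diagonal_one]
  rw [hq, Matrix.transpose_mul, Matrix.transpose_transpose, Matrix.mul_assoc,
    ← Matrix.mul_assoc _ _ Vᵀ, hA, one_mul, hVVt]
end
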